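/- The Misra-Bugajski map R : μ ↦ W_μ from probability measures on the projective Hilbert space to density operators, defined by tr(W_μ A) = ∫ tr(PA) dμ(P), is affine and surjective, and it is not injective if dim H ≥ 2. -/

import Mathlib

open MeasureTheory Topology Filter

/-- The rank-one operator `|φ⟩⟨φ|`. -/
noncomputable def rankOne {H : Type*} [NormedAddCommGroup H] [InnerProductSpace ℂ H]
    (φ : H) : H →L[ℂ] H := (innerSL ℂ φ).smulRight φ

/-- The set of rank-one orthogonal projections (pure states / projective Hilbert space). -/
noncomputable def projSet (H : Type*) [NormedAddCommGroup H] [InnerProductSpace ℂ H] :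
    Set (H →L[ℂ] H) := {T | ∃ φ : H, ‖φ‖ = 1 ∧ T = rankOne φ}

/-- The trace of an operator computed along a Hilbert basis. -/
noncomputable def traceAlong {H ι : Type*} [NormedAddCommGroup H] [InnerProductSpace ℂ H]
    (b : HilbertBasis ι ℂ H) (A : H →L[ℂ] H) : ℂ :=
  ∑' i, inner ℂ (b i) (A (b i))

/-- `W` is a density operator: positive, trace class, with trace one
(trace computed along the Hilbert basis `b`). -/
noncomputable def IsDensityOp {H ι : Type*} [NormedAddCommGroup H] [InnerProductSpace ℂ H]
    [CompleteSpace H] (b : HilbertBasis ι ℂ H) (W : H →L[ℂ] H) : Prop :=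
  W.IsPositive ∧ HasSum (fun i => (inner ℂ (b i) (W (b i)) : ℂ)) 1

/-- `W` is the image of `μ` under the Misra-Bugajski map:
`tr(W A) = ∫ tr(P A) dμ(P)` for all bounded self-adjoint `A`. -/
noncomputable def IsMB {H ι : Type*} [NormedAddCommGroup H] [InnerProductSpace ℂ H]
    [CompleteSpace H] [MeasurableSpace ↥(projSet H)] (b : HilbertBasis ι ℂ H)
    (μ : Measure ↥(projSet H)) (W : H →L[ℂ] H) : Prop :=
  IsDensityOp b W ∧ ∀ A : H →L[ℂ] H, IsSelfAdjoint A →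
    traceAlong b (W * A) = ∫ P, traceAlong b (P.1 * A) ∂μ

/-! Affinity is linearity of the trace along `b` and of the integral in the measure.
For surjectivity write `W = S * S` with `S = √W`: then `tr(W A) = ∑ⱼ ⟪S bⱼ, A S bⱼ⟫`, which is the
integral of `P ↦ tr(P A)` against `∑ⱼ ‖S bⱼ‖² δ_{[S bⱼ]}`. For non-injectivity, if `e, f` are
orthonormal then the equal mixtures of `[e], [f]` and of `[(e + f)/√2], [(e - f)/√2]` have the same
density operator, by the parallelogram identity for `|φ⟩⟨φ|`. Measurability of `P ↦ tr(P A)`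
comes from the countability of a Hilbert basis of a separable space. -/

open scoped NNReal
local notation "⟪" x ", " y "⟫" => @inner ℂ _ _ x y

section RankOne

variable {H : Type*} [NormedAddCommGroup H] [InnerProductSpace ℂ H]

lemma rankOne_apply (φ x : H) : rankOne φ x = ⟪φ, x⟫ • φ := rfl

lemma rankOne_real_smul (r : ℝ) (φ : H) : rankOne (r • φ) = (r ^ 2) • rankOne φ := by
  ext x
  simp only [rankOne_apply, smul_apply, ← Complex.coe_smul, inner_smul_left,
    Complex.conj_ofReal, smul_smul]
  push_cast; ring_nf

lemma rankOne_add_add_rankOne_sub (x y : H) :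
    rankOne (x + y) + rankOne (x - y) = (2 : ℝ) • (rankOne x + rankOne y) := by
  ext z
  simp only [add_apply, smul_apply, rankOne_apply, inner_add_left, inner_sub_left,
    ← Complex.coe_smul]
  module

end RankOne

section TraceAlong

variable {H ι : Type*} [NormedAddCommGroup H] [InnerProductSpace ℂ H]

lemma HilbertBasis.countable [TopologicalSpace.SeparableSpace H] (b : HilbertBasis ι ℂ H) :
    Countable ι := by
  refine Pairwise.countable_of_isOpen_disjoint (s := fun i => Metric.ball (b i) 2⁻¹)
    (fun i j hij => Metric.ball_disjoint_ball ?_) (fun _ => Metric.isOpen_ball)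
    (fun _ => Metric.nonempty_ball.mpr (by norm_num))
  have h : ‖b i - b j‖ ^ 2 = 2 := by
    rw [@norm_sub_sq ℂ, b.orthonormal.2 hij, b.orthonormal.1 i, b.orthonormal.1 j]
    norm_num
  rw [dist_eq_norm]
  nlinarith [norm_nonneg (b i - b j)]

variable (b : HilbertBasis ι ℂ H)

lemma traceAlong_smul_add_smul {T₁ T₂ : H →L[ℂ] H} (h₁ : Summable fun i => ⟪b i, T₁ (b i)⟫)
    (h₂ : Summable fun i => ⟪b i, T₂ (b i)⟫) (a c : ℝ) :
    traceAlong b (a • T₁ + c • T₂) = a • traceAlong b T₁ + c • traceAlong b T₂ := by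
  simp only [traceAlong, add_apply, smul_apply, inner_add_right, ← Complex.coe_smul,
    inner_smul_right]
  rw [(h₁.mul_left _).tsum_add (h₂.mul_left _), h₁.tsum_mul_left, h₂.tsum_mul_left]
  simp only [smul_eq_mul]

lemma hasSum_norm_inner_sq (x : H) : HasSum (fun i => ‖⟪b i, x⟫‖ ^ 2) (‖x‖ ^ 2) := by
  have h := (b.hasSum_inner_mul_inner x x).mapL Complex.reCLM
  simp only [Complex.reCLM_apply] at h
  rw [← inner_self_eq_norm_sq (𝕜 := ℂ)]
  refine h.congr_fun fun i => ?_
  rw [← inner_conj_symm x (b i), mul_comm, Complex.mul_conj, Complex.normSq_eq_norm_sq,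
    norm_inner_symm]
  norm_cast

variable {κ : Type*}

lemma summable_norm_inner_sq_prod {u : κ → H} (hu : Summable fun k => ‖u k‖ ^ 2) :
    Summable fun p : κ × ι => ‖⟪b p.2, u p.1⟫‖ ^ 2 := by
  rw [summable_prod_of_nonneg fun _ => by positivity]
  exact ⟨fun k => (hasSum_norm_inner_sq b (u k)).summable,
    hu.congr fun k => (hasSum_norm_inner_sq b (u k)).tsum_eq.symm⟩

lemma summable_inner_mul_inner_prod {u v : κ → H} (hu : Summable fun k => ‖u k‖ ^ 2)
    (hv : Summable fun k => ‖v k‖ ^ 2) :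
    Summable fun p : κ × ι => ⟪v p.1, b p.2⟫ * ⟪b p.2, u p.1⟫ := by
  refine .of_norm_bounded
    (((summable_norm_inner_sq_prod b hv).add (summable_norm_inner_sq_prod b hu)).div_const 2)
    fun p => ?_
  rw [norm_mul, norm_inner_symm]
  nlinarith [two_mul_le_add_sq ‖⟪b p.2, v p.1⟫‖ ‖⟪b p.2, u p.1⟫‖]

variable [CompleteSpace H]

lemma hasSum_inner_rankOne_mul (φ : H) (A : H →L[ℂ] H) :
    HasSum (fun i => ⟪b i, (rankOne φ * A) (b i)⟫) ⟪φ, A φ⟫ := by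
  simpa only [ContinuousLinearMap.adjoint_inner_left, mul_apply_eq_comp, rankOne_apply,
    inner_smul_right] using b.hasSum_inner_mul_inner (ContinuousLinearMap.adjoint A φ) φ

lemma traceAlong_rankOne_mul (φ : H) (A : H →L[ℂ] H) :
    traceAlong b (rankOne φ * A) = ⟪φ, A φ⟫ :=
  (hasSum_inner_rankOne_mul b φ A).tsum_eq

lemma inner_map_left_of_isSelfAdjoint {S : H →L[ℂ] H} (hS : IsSelfAdjoint S) (x y : H) :
    ⟪S x, y⟫ = ⟪x, S y⟫ := by
  simpa only [hS.adjoint_eq] using ContinuousLinearMap.adjoint_inner_left S y x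

-- Both sides are iterated sums of the absolutely summable double series
-- `⟪A† S bⱼ, bᵢ⟫ ⟪bᵢ, S bⱼ⟫`.
lemma hasSum_inner_mul_self_mul {S : H →L[ℂ] H} (hS : IsSelfAdjoint S)
    (hsum : Summable fun i => ‖S (b i)‖ ^ 2) (A : H →L[ℂ] H) :
    HasSum (fun i => ⟪b i, (S * S * A) (b i)⟫) (∑' j, ⟪S (b j), A (S (b j))⟫) := by
  set A' := ContinuousLinearMap.adjoint A
  have hv : Summable fun j => ‖A' (S (b j))‖ ^ 2 :=
    .of_nonneg_of_le (fun _ => by positivity)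
      (fun j => by simpa only [mul_pow] using pow_le_pow_left₀ (norm_nonneg _) (A'.le_opNorm _) 2)
      (hsum.mul_left (‖A'‖ ^ 2))
  have hf := summable_inner_mul_inner_prod b hsum hv
  have hrow : ∀ j, HasSum (fun i => ⟪A' (S (b j)), b i⟫ * ⟪b i, S (b j)⟫)
      ⟪S (b j), A (S (b j))⟫ := fun j => by
    simpa only [A', ContinuousLinearMap.adjoint_inner_left] using
      b.hasSum_inner_mul_inner (A' (S (b j))) (S (b j))
  have hcol : ∀ i, HasSum (fun j => ⟪A' (S (b j)), b i⟫ * ⟪b i, S (b j)⟫)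
      ⟪b i, (S * S * A) (b i)⟫ := fun i => by
    rw [mul_apply_eq_comp, mul_apply_eq_comp, ← inner_map_left_of_isSelfAdjoint hS]
    refine (b.hasSum_inner_mul_inner (S (b i)) (S (A (b i)))).congr_fun fun j => ?_
    rw [ContinuousLinearMap.adjoint_inner_left, inner_map_left_of_isSelfAdjoint hS,
      inner_map_left_of_isSelfAdjoint hS, mul_comm]
  rw [(hf.hasSum.prod_fiberwise hrow).tsum_eq]
  exact ((Equiv.prodComm ι ι).hasSum_iff.mpr hf.hasSum).prod_fiberwise hcol

end TraceAlong

section DensityOp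

variable {H ι : Type*} [NormedAddCommGroup H] [InnerProductSpace ℂ H] [CompleteSpace H]
  {b : HilbertBasis ι ℂ H}

lemma isDensityOp_rankOne {φ : H} (hφ : ‖φ‖ = 1) : IsDensityOp b (rankOne φ) := by
  refine ⟨InnerProductSpace.isPositive_rankOne_self φ, ?_⟩
  simpa [inner_self_eq_norm_sq_to_K, hφ] using hasSum_inner_rankOne_mul b φ 1

lemma IsDensityOp.smul_add_smul {W₁ W₂ : H →L[ℂ] H} (h₁ : IsDensityOp b W₁)
    (h₂ : IsDensityOp b W₂) {a c : ℝ≥0} (hac : a + c = 1) :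
    IsDensityOp b ((a : ℝ) • W₁ + (c : ℝ) • W₂) := by
  refine ⟨?_, ?_⟩
  · rw [← ContinuousLinearMap.nonneg_iff_isPositive]
    exact add_nonneg (smul_nonneg a.2 ((W₁.nonneg_iff_isPositive).mpr h₁.1))
      (smul_nonneg c.2 ((W₂.nonneg_iff_isPositive).mpr h₂.1))
  · have hsum : (a : ℝ) • (1 : ℂ) + (c : ℝ) • (1 : ℂ) = 1 := by
      simp [Complex.real_smul, ← Complex.ofReal_add, ← NNReal.coe_add, hac]
    rw [← hsum]
    refine ((h₁.2.const_smul (a : ℝ)).add (h₂.2.const_smul (c : ℝ))).congr_fun fun i => ?_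
    simp only [add_apply, smul_apply, inner_add_right, ← Complex.coe_smul, inner_smul_right,
      smul_eq_mul]

lemma IsDensityOp.exists_sqrt {W : H →L[ℂ] H} (hW : IsDensityOp b W) :
    ∃ S : H →L[ℂ] H, IsSelfAdjoint S ∧ S * S = W ∧ HasSum (fun i => ‖S (b i)‖ ^ 2) 1 := by
  have hW₀ : 0 ≤ W := (ContinuousLinearMap.nonneg_iff_isPositive W).mpr hW.1
  have hS : IsSelfAdjoint (CFC.sqrt W) := (CFC.sqrt_nonneg W).isSelfAdjoint
  have hSS : CFC.sqrt W * CFC.sqrt W = W := CFC.sqrt_mul_sqrt_self W hW₀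
  refine ⟨CFC.sqrt W, hS, hSS, ?_⟩
  have h := hW.2.mapL Complex.reCLM
  rw [← hSS, Complex.reCLM_apply, Complex.one_re] at h
  refine h.congr_fun fun i => ?_
  rw [Complex.reCLM_apply, mul_apply_eq_comp, ← inner_map_left_of_isSelfAdjoint hS,
    ← inner_self_eq_norm_sq (𝕜 := ℂ)]
  rfl

lemma IsDensityOp.summable_inner_mul {W : H →L[ℂ] H} (hW : IsDensityOp b W) (A : H →L[ℂ] H) :
    Summable fun i => ⟪b i, (W * A) (b i)⟫ := by
  obtain ⟨S, hS, rfl, hsum⟩ := hW.exists_sqrt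
  exact (hasSum_inner_mul_self_mul b hS hsum.summable A).summable

end DensityOp

section PureStates

variable {H ι : Type*} [NormedAddCommGroup H] [InnerProductSpace ℂ H]

noncomputable def pureState {φ : H} (hφ : ‖φ‖ = 1) : projSet H := ⟨rankOne φ, φ, hφ, rfl⟩

@[simp] lemma coe_pureState {φ : H} (hφ : ‖φ‖ = 1) : (pureState hφ : H →L[ℂ] H) = rankOne φ := rfl

lemma norm_inv_norm_smul {v : H} (hv : v ≠ 0) : ‖(‖v‖⁻¹ : ℝ) • v‖ = 1 := by
  rw [norm_smul, norm_inv, norm_norm, inv_mul_cancel₀ (norm_ne_zero_iff.mpr hv)]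

lemma norm_sq_smul_inner_inv_norm_smul (v : H) (A : H →L[ℂ] H) :
    (‖v‖ ^ 2 : ℝ) • ⟪(‖v‖⁻¹ : ℝ) • v, A ((‖v‖⁻¹ : ℝ) • v)⟫ = ⟪v, A v⟫ := by
  rcases eq_or_ne v 0 with rfl | hv
  · simp
  simp only [← Complex.coe_smul, map_smul, inner_smul_left, inner_smul_right, Complex.conj_ofReal,
    smul_eq_mul, ← mul_assoc, ← Complex.ofReal_mul]
  have hv' : ‖v‖ ≠ 0 := norm_ne_zero_iff.mpr hv
  rw [show ‖v‖ ^ 2 * ‖v‖⁻¹ * ‖v‖⁻¹ = 1 by field_simp, Complex.ofReal_one, one_mul]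

lemma pureState_ne_pureState_of_inner {φ ψ x : H} (hφ : ‖φ‖ = 1) (hψ : ‖ψ‖ = 1)
    (hφx : ⟪φ, x⟫ = 0) (hψx : ⟪ψ, x⟫ ≠ 0) : pureState hφ ≠ pureState hψ := by
  intro h
  have hx := DFunLike.congr_fun (congrArg Subtype.val h) x
  simp only [coe_pureState, rankOne_apply, hφx, zero_smul] at hx
  have hψ₀ : ψ = 0 := (smul_eq_zero.mp hx.symm).resolve_left hψx
  simp [hψ₀] at hψ

lemma norm_inv_sqrt_two_smul {v : H} (hv : ‖v‖ ^ 2 = 2) : ‖(√2)⁻¹ • v‖ = 1 := by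
  rw [← pow_eq_one_iff_of_nonneg (norm_nonneg _) two_ne_zero, norm_smul, mul_pow, hv,
    Real.norm_eq_abs, sq_abs, inv_pow, Real.sq_sqrt zero_le_two]
  norm_num

end PureStates

section MisraBugajski

variable {H ι : Type*} [NormedAddCommGroup H] [InnerProductSpace ℂ H] [CompleteSpace H]
  {b : HilbertBasis ι ℂ H}

lemma norm_traceAlong_mul_le (A : H →L[ℂ] H) (P : projSet H) :
    ‖traceAlong b (P.1 * A)‖ ≤ ‖A‖ := by
  obtain ⟨φ, hφ, hP⟩ := P.2
  rw [hP, traceAlong_rankOne_mul]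
  calc ‖⟪φ, A φ⟫‖ ≤ ‖φ‖ * (‖A‖ * ‖φ‖) :=
        (norm_inner_le_norm _ _).trans (by gcongr; exact A.le_opNorm φ)
    _ = ‖A‖ := by rw [hφ]; ring

variable [MeasurableSpace (projSet H)] [BorelSpace (projSet H)]

lemma measurable_traceAlong_mul [Countable ι] (A : H →L[ℂ] H) :
    Measurable fun P : projSet H => traceAlong b (P.1 * A) := by
  refine measurable_of_tendsto_metrizable' (f := fun s P => ∑ i ∈ s, ⟪b i, (P.1 * A) (b i)⟫)
    atTop (fun s => Finset.measurable_sum s fun i _ => Continuous.measurable ?_)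
    (tendsto_pi_nhds.mpr fun P => ?_)
  · exact continuous_const.inner
      ((ContinuousLinearMap.apply ℂ H (A (b i))).continuous.comp continuous_subtype_val)
  obtain ⟨φ, -, hP⟩ := P.2
  simp only [hP, traceAlong_rankOne_mul]
  exact hasSum_inner_rankOne_mul b φ A

lemma integrable_traceAlong_mul [Countable ι] (A : H →L[ℂ] H) (μ : Measure (projSet H))
    [IsFiniteMeasure μ] : Integrable (fun P : projSet H => traceAlong b (P.1 * A)) μ :=
  .mono' (integrable_const ‖A‖) (measurable_traceAlong_mul A).aestronglyMeasurable
    (.of_forall (norm_traceAlong_mul_le A))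

lemma isMB_dirac {φ : H} (hφ : ‖φ‖ = 1) : IsMB b (Measure.dirac (pureState hφ)) (rankOne φ) :=
  ⟨isDensityOp_rankOne hφ, fun A _ => by rw [integral_dirac, coe_pureState]⟩

lemma IsMB.smul_add_smul [Countable ι] {μ₁ μ₂ : Measure (projSet H)} [IsFiniteMeasure μ₁]
    [IsFiniteMeasure μ₂] {W₁ W₂ : H →L[ℂ] H} (h₁ : IsMB b μ₁ W₁) (h₂ : IsMB b μ₂ W₂)
    {a c : ℝ≥0} (hac : a + c = 1) :
    IsMB b (a • μ₁ + c • μ₂) ((a : ℝ) • W₁ + (c : ℝ) • W₂) := by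
  refine ⟨h₁.1.smul_add_smul h₂.1 hac, fun A hA => ?_⟩
  rw [add_mul, smul_mul_assoc, smul_mul_assoc, traceAlong_smul_add_smul b
    (h₁.1.summable_inner_mul A) (h₂.1.summable_inner_mul A), h₁.2 A hA, h₂.2 A hA,
    integral_add_measure (integrable_traceAlong_mul A _) (integrable_traceAlong_mul A _),
    integral_smul_nnreal_measure, integral_smul_nnreal_measure]
  rfl

lemma smul_dirac_add_smul_dirac_ne {α : Type*} [MeasurableSpace α] [MeasurableSingletonClass α]
    {x y z w : α} (hz : z ≠ x) (hw : w ≠ x) {a c a' c' : ℝ≥0} (ha : a ≠ 0) :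
    a • Measure.dirac x + c • Measure.dirac y ≠ a' • Measure.dirac z + c' • Measure.dirac w := by
  intro h
  simpa [Measure.dirac_apply, hz, hw, ha] using congrArg (· {x}) h

lemma isProbabilityMeasure_smul_add_smul {α : Type*} [MeasurableSpace α] {μ₁ μ₂ : Measure α}
    [IsProbabilityMeasure μ₁] [IsProbabilityMeasure μ₂] {a c : ℝ≥0} (hac : a + c = 1) :
    IsProbabilityMeasure (a • μ₁ + c • μ₂) :=
  ⟨by simp [← ENNReal.coe_add, hac]⟩

lemma IsDensityOp.exists_isMB [Countable ι] {W : H →L[ℂ] H} (hW : IsDensityOp b W) :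
    ∃ μ : Measure (projSet H), IsProbabilityMeasure μ ∧ IsMB b μ W := by
  obtain ⟨S, hS, rfl, hsum⟩ := hW.exists_sqrt
  set s : Set ι := {j | S (b j) ≠ 0}
  set μ : Measure (projSet H) := Measure.sum fun j : s =>
    ENNReal.ofReal (‖S (b j)‖ ^ 2) • Measure.dirac (pureState (norm_inv_norm_smul j.2))
  have hsupp {M : Type} [Zero M] {f : H → M} (hf : f 0 = 0) :
      Function.support (fun j => f (S (b j))) ⊆ s :=
    fun j hj h0 => hj (by simp only [h0, hf])
  have hs : Summable fun j : s => ‖S (b j)‖ ^ 2 := hsum.summable.subtype s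
  have hμ : IsProbabilityMeasure μ := by
    constructor
    rw [Measure.sum_apply _ MeasurableSet.univ]
    simp only [Measure.smul_apply, measure_univ, smul_eq_mul, mul_one]
    rw [← ENNReal.ofReal_tsum_of_nonneg (fun _ => by positivity) hs,
      tsum_subtype_eq_of_support_subset (hsupp (f := fun v => ‖v‖ ^ 2) (by simp)), hsum.tsum_eq,
      ENNReal.ofReal_one]
  refine ⟨μ, hμ, hW, fun A _ => ?_⟩
  rw [traceAlong, (hasSum_inner_mul_self_mul b hS hsum.summable A).tsum_eq,
    integral_sum_measure (integrable_traceAlong_mul A μ),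
    ← tsum_subtype_eq_of_support_subset (hsupp (f := fun v => ⟪v, A v⟫) (by simp))]
  refine tsum_congr fun j => ?_
  rw [integral_smul_measure, integral_dirac, ENNReal.toReal_ofReal (by positivity), coe_pureState,
    traceAlong_rankOne_mul, norm_sq_smul_inner_inv_norm_smul]

lemma exists_ne_isMB_of_orthonormal [Countable ι] {e f : H} (he : ‖e‖ = 1) (hf : ‖f‖ = 1)
    (hef : ⟪e, f⟫ = 0) :
    ∃ (μ₁ μ₂ : Measure (projSet H)) (W : H →L[ℂ] H),
      IsProbabilityMeasure μ₁ ∧ IsProbabilityMeasure μ₂ ∧ μ₁ ≠ μ₂ ∧ IsMB b μ₁ W ∧ IsMB b μ₂ W := by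
  have hq₁ : ‖(√2)⁻¹ • (e + f)‖ = 1 :=
    norm_inv_sqrt_two_smul (by rw [@norm_add_sq ℂ, hef, he, hf]; norm_num)
  have hq₂ : ‖(√2)⁻¹ • (e - f)‖ = 1 :=
    norm_inv_sqrt_two_smul (by rw [@norm_sub_sq ℂ, hef, he, hf]; norm_num)
  have hne {q : H} (hq : ‖q‖ = 1) (hqf : ⟪q, f⟫ ≠ 0) : pureState hq ≠ pureState he :=
    (pureState_ne_pureState_of_inner he hq hef hqf).symm
  have hhalf : (2⁻¹ : ℝ≥0) + 2⁻¹ = 1 := by norm_num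
  have hW : ((2⁻¹ : ℝ≥0) : ℝ) • rankOne ((√2)⁻¹ • (e + f))
        + ((2⁻¹ : ℝ≥0) : ℝ) • rankOne ((√2)⁻¹ • (e - f))
      = ((2⁻¹ : ℝ≥0) : ℝ) • rankOne e + ((2⁻¹ : ℝ≥0) : ℝ) • rankOne f := by
    rw [rankOne_real_smul, rankOne_real_smul, inv_pow, Real.sq_sqrt zero_le_two]
    push_cast
    linear_combination (norm := module) (4⁻¹ : ℝ) • rankOne_add_add_rankOne_sub e f
  refine ⟨(2⁻¹ : ℝ≥0) • Measure.dirac (pureState he) + (2⁻¹ : ℝ≥0) • Measure.dirac (pureState hf),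
    (2⁻¹ : ℝ≥0) • Measure.dirac (pureState hq₁) + (2⁻¹ : ℝ≥0) • Measure.dirac (pureState hq₂),
    _, isProbabilityMeasure_smul_add_smul hhalf, isProbabilityMeasure_smul_add_smul hhalf,
    smul_dirac_add_smul_dirac_ne (hne hq₁ ?_) (hne hq₂ ?_) (by norm_num),
    (isMB_dirac he).smul_add_smul (isMB_dirac hf) hhalf,
    hW ▸ (isMB_dirac hq₁).smul_add_smul (isMB_dirac hq₂) hhalf⟩ <;>
  simp [hef, inner_self_eq_norm_sq_to_K, hf]

end MisraBugajski

lemma exists_orthonormal_pair {H : Type*} [NormedAddCommGroup H] [InnerProductSpace ℂ H]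
    (h : 2 ≤ Module.rank ℂ H) : ∃ e f : H, ‖e‖ = 1 ∧ ‖f‖ = 1 ∧ ⟪e, f⟫ = 0 := by
  have : Nontrivial H := Module.rank_pos_iff_of_free.mp (lt_of_lt_of_le (by norm_num) h)
  obtain ⟨x, hx⟩ := exists_ne (0 : H)
  have hperp : (ℂ ∙ x)ᗮ ≠ ⊥ := by
    rw [Ne, Submodule.orthogonal_eq_bot_iff]
    intro htop
    have hle := rank_span_le (R := ℂ) ({x} : Set H)
    rw [htop, rank_top, Cardinal.mk_singleton] at hle
    exact absurd (h.trans hle) (by norm_num)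
  obtain ⟨y, hy, hy₀⟩ := Submodule.exists_mem_ne_zero_of_ne_bot hperp
  rw [Submodule.mem_orthogonal_singleton_iff_inner_right] at hy
  refine ⟨_, _, norm_inv_norm_smul hx, norm_inv_norm_smul hy₀, ?_⟩
  simp [hy]

theorem stmt14_general {H ι : Type*} [NormedAddCommGroup H] [InnerProductSpace ℂ H] [CompleteSpace H]
    [SecondCountableTopology H] (b : HilbertBasis ι ℂ H)
    [MeasurableSpace ↥(projSet H)] [BorelSpace ↥(projSet H)] :
    -- affine
    (∀ (μ₁ μ₂ : Measure ↥(projSet H)) [IsProbabilityMeasure μ₁] [IsProbabilityMeasure μ₂]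
        (W₁ W₂ : H →L[ℂ] H) (a : NNReal), a ≤ 1 → IsMB b μ₁ W₁ → IsMB b μ₂ W₂ →
        IsMB b (a • μ₁ + (1 - a) • μ₂) ((a : ℝ) • W₁ + (((1 - a : NNReal) : ℝ)) • W₂)) ∧
    -- surjective
    (∀ W : H →L[ℂ] H, IsDensityOp b W →
        ∃ μ : Measure ↥(projSet H), IsProbabilityMeasure μ ∧ IsMB b μ W) ∧
    -- not injective when dim H ≥ 2
    (2 ≤ Module.rank ℂ H →
      ∃ (μ₁ μ₂ : Measure ↥(projSet H)) (W : H →L[ℂ] H),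
        IsProbabilityMeasure μ₁ ∧ IsProbabilityMeasure μ₂ ∧ μ₁ ≠ μ₂ ∧
        IsMB b μ₁ W ∧ IsMB b μ₂ W) := by
  have : Countable ι := b.countable
  refine ⟨fun μ₁ μ₂ _ _ W₁ W₂ a ha h₁ h₂ => h₁.smul_add_smul h₂ (add_tsub_cancel_of_le ha),
    fun W hW => hW.exists_isMB, fun h => ?_⟩
  obtain ⟨e, f, he, hf, hef⟩ := exists_orthonormal_pair h
  exact exists_ne_isMB_of_orthonormal he hf hef

theorem stmt14 {H ι : Type*} [NormedAddCommGroup H] [InnerProductSpace ℂ H] [CompleteSpace H]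
    [Nontrivial H] [SecondCountableTopology H] (b : HilbertBasis ι ℂ H)
    [MeasurableSpace ↥(projSet H)] [BorelSpace ↥(projSet H)] :
    -- affine
    (∀ (μ₁ μ₂ : Measure ↥(projSet H)) [IsProbabilityMeasure μ₁] [IsProbabilityMeasure μ₂]
        (W₁ W₂ : H →L[ℂ] H) (a : NNReal), a ≤ 1 → IsMB b μ₁ W₁ → IsMB b μ₂ W₂ →
        IsMB b (a • μ₁ + (1 - a) • μ₂) ((a : ℝ) • W₁ + (((1 - a : NNReal) : ℝ)) • W₂)) ∧
    -- surjective
    (∀ W : H →L[ℂ] H, IsDensityOp b W →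
        ∃ μ : Measure ↥(projSet H), IsProbabilityMeasure μ ∧ IsMB b μ W) ∧
    -- not injective when dim H ≥ 2
    (2 ≤ Module.rank ℂ H →
      ∃ (μ₁ μ₂ : Measure ↥(projSet H)) (W : H →L[ℂ] H),
        IsProbabilityMeasure μ₁ ∧ IsProbabilityMeasure μ₂ ∧ μ₁ ≠ μ₂ ∧
        IsMB b μ₁ W ∧ IsMB b μ₂ W) :=
  stmt14_general b
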